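/- arXiv:2201.06819 — 5 statements merged into one kernel-verified Lean document; each statement's English description precedes it below -/
import Mathlib

section
/- Let P̆, R, C, K be as in the Kalman update with K = P̆Cᵀ(CP̆Cᵀ + R)⁻¹ and P = (P̆⁻¹ + CᵀR⁻¹C)⁻¹. Then for any n×m matrix L, P ≤ (I − LC)P̆(I − LC)ᵀ + LRLᵀ, and in particular P ≤ P̆. -/
open Matrix

/-- The posterior covariance `P = (P̆⁻¹ + CᵀR⁻¹C)⁻¹` with the optimal Kalman gain is dominated
by the covariance obtained with any gain `L`; in particular `P ≤ P̆`. -/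
theorem kalman_posterior_dominated {n m : ℕ}
    (Pb : Matrix (Fin n) (Fin n) ℝ) (hPb : Pb.PosDef)
    (R : Matrix (Fin m) (Fin m) ℝ) (hR : R.PosDef)
    (C : Matrix (Fin m) (Fin n) ℝ)
    (K : Matrix (Fin n) (Fin m) ℝ)
    (hK : K = Pb * Cᵀ * (C * Pb * Cᵀ + R)⁻¹)
    (P : Matrix (Fin n) (Fin n) ℝ)
    (hP : P = (Pb⁻¹ + Cᵀ * R⁻¹ * C)⁻¹) :
    (∀ L : Matrix (Fin n) (Fin m) ℝ,
      ((1 - L * C) * Pb * (1 - L * C)ᵀ + L * R * Lᵀ - P).PosSemidef)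
    ∧ (Pb - P).PosSemidef := by
  set S : Matrix (Fin m) (Fin m) ℝ := C * Pb * Cᵀ + R with hS
  have hCPbCt : (C * Pb * Cᵀ).PosSemidef := by
    have := hPb.posSemidef.mul_mul_conjTranspose_same C
    rwa [conjTranspose_eq_transpose_of_trivial] at this
  have hSpd : S.PosDef := Matrix.PosDef.posSemidef_add hCPbCt hR
  have hPbT : Pbᵀ = Pb := by
    have := hPb.isHermitian
    rwa [Matrix.IsHermitian, conjTranspose_eq_transpose_of_trivial] at this
  have hST : Sᵀ = S := by
    have := hSpd.isHermitian
    rwa [Matrix.IsHermitian, conjTranspose_eq_transpose_of_trivial] at this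
  have hSu : IsUnit S.det := hSpd.det_pos.ne'.isUnit
  have hPbu : IsUnit Pb.det := hPb.det_pos.ne'.isUnit
  have hRu : IsUnit R.det := hR.det_pos.ne'.isUnit
  have hCPb : C * Pb * Cᵀ = S - R := by rw [hS]; abel
  -- Woodbury: P = Pb - Pb Cᵀ S⁻¹ C Pb
  have hPeq : P = Pb - Pb * Cᵀ * S⁻¹ * (C * Pb) := by
    rw [hP]
    apply inv_eq_right_inv
    have e2 : C * (Pb * (Cᵀ * (S⁻¹ * (C * Pb)))) = C * Pb - R * (S⁻¹ * (C * Pb)) := by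
      rw [← Matrix.mul_assoc, ← Matrix.mul_assoc, hCPb, Matrix.sub_mul,
        ← Matrix.mul_assoc S, Matrix.mul_nonsing_inv S hSu, Matrix.one_mul]
    simp only [Matrix.add_mul, Matrix.mul_sub, Matrix.mul_assoc]
    rw [Matrix.nonsing_inv_mul Pb hPbu, Matrix.nonsing_inv_mul_cancel_left Pb _ hPbu,
      e2, Matrix.mul_sub R⁻¹, Matrix.nonsing_inv_mul_cancel_left R _ hRu,
      Matrix.mul_sub Cᵀ]
    abel
  have hKt : Kᵀ = S⁻¹ * (C * Pb) := by
    rw [hK, transpose_mul, transpose_mul, transpose_nonsing_inv, hST,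
      transpose_transpose, hPbT]
  have hKS : K * S = Pb * Cᵀ := by
    rw [hK, Matrix.nonsing_inv_mul_cancel_right _ _ hSu]
  have hSKt : S * Kᵀ = C * Pb := by
    rw [hKt, Matrix.mul_nonsing_inv_cancel_left S _ hSu]
  have key : ∀ L : Matrix (Fin n) (Fin m) ℝ,
      (1 - L * C) * Pb * (1 - L * C)ᵀ + L * R * Lᵀ - P
        = (L - K) * S * (L - K)ᵀ := by
    intro L
    rw [hPeq, Matrix.transpose_sub, Matrix.transpose_one, Matrix.transpose_mul,
      Matrix.transpose_sub]
    simp only [Matrix.sub_mul, Matrix.mul_sub]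
    rw [Matrix.mul_assoc L S Kᵀ, hSKt, Matrix.mul_assoc K S Kᵀ, hSKt, hKS, hK]
    rw [hS]
    simp only [Matrix.mul_add, Matrix.add_mul, Matrix.mul_sub, Matrix.sub_mul,
      Matrix.mul_one, Matrix.one_mul, Matrix.mul_assoc]
    abel
  have main : ∀ L : Matrix (Fin n) (Fin m) ℝ,
      ((1 - L * C) * Pb * (1 - L * C)ᵀ + L * R * Lᵀ - P).PosSemidef := by
    intro L
    rw [key L]
    have := hSpd.posSemidef.mul_mul_conjTranspose_same (L - K)
    rwa [conjTranspose_eq_transpose_of_trivial] at this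
  refine ⟨main, ?_⟩
  have := main 0
  simpa using this
end

section
/- Define P_{k+1,i} = ((ÃP_{k,i}Ãᵀ + d_i ∑_{j∈N_i} G̃P_{k,j}G̃ᵀ + Q_i)⁻¹ + CᵀR_i⁻¹C)⁻¹ with initial condition P_{0,i} = 0 for all i. Then the sequence (P_{k,i})_{k≥0} is monotonically nondecreasing in k for every i, i.e., P_{k,i} ≤ P_{k+1,i} in the Loewner order for all k. -/
/-!
Matrix inversion is antitone on positive definite matrices (Loewner order), so the information-form
update `P ↦ (S(P)⁻¹ + CᵀR⁻¹C)⁻¹` is monotone on positive semidefinite families as soon as the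
prediction `S(P) = ÃPÃᵀ + d ∑ G̃P_jG̃ᵀ + Q` is, and `S` is monotone as a sum of congruences. Since
`P₁ ≥ 0 = P₀`, induction on `k` gives `P_k ≤ P_{k+1}` at every node simultaneously.
-/

open Matrix
open scoped ComplexOrder MatrixOrder

namespace Matrix

variable {𝕜 n : Type*} [RCLike 𝕜]

lemma PosDef.of_le {A B : Matrix n n 𝕜} (hA : A.PosDef) (hAB : A ≤ B) : B.PosDef := by
  simpa using hA.add_posSemidef hAB

lemma PosDef.inv_anti [Fintype n] [DecidableEq n] {A B : Matrix n n 𝕜} (hA : A.PosDef)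
    (hAB : A ≤ B) : B⁻¹ ≤ A⁻¹ := by
  have hB := hA.of_le hAB
  have hD : (B - A).PosSemidef := hAB
  have hAu : IsUnit A.det := hA.isUnit.map detMonoidHom
  have hBu : IsUnit B.det := hB.isUnit.map detMonoidHom
  have hDB : (B⁻¹ * (B - A))ᴴ = (B - A) * B⁻¹ := by
    rw [conjTranspose_mul, hD.isHermitian.eq, hB.inv.isHermitian.eq]
  have key : A⁻¹ - B⁻¹ = B⁻¹ * (B - A) * B⁻¹ + B⁻¹ * (B - A) * A⁻¹ * (B⁻¹ * (B - A))ᴴ := by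
    rw [hDB]
    simp only [Matrix.mul_sub, Matrix.sub_mul, Matrix.mul_assoc,
      nonsing_inv_mul_cancel_left _ _ hAu, nonsing_inv_mul _ hBu, mul_nonsing_inv _ hBu,
      mul_nonsing_inv _ hAu, Matrix.mul_one, Matrix.one_mul]
    abel
  have hBDB := hD.mul_mul_conjTranspose_same B⁻¹
  rw [hB.inv.isHermitian.eq] at hBDB
  rw [le_iff, key]
  exact hBDB.add (hA.inv.posSemidef.mul_mul_conjTranspose_same _)

lemma PosDef.inv_inv_add_le_inv_inv_add [Fintype n] [DecidableEq n] {A B K : Matrix n n 𝕜}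
    (hA : A.PosDef) (hAB : A ≤ B) (hK : K.PosSemidef) : (A⁻¹ + K)⁻¹ ≤ (B⁻¹ + K)⁻¹ :=
  ((hA.of_le hAB).inv.add_posSemidef hK).inv_anti (add_le_add_left (hA.inv_anti hAB) K)

lemma mul_mul_transpose_le_mul_mul_transpose {m : Type*} [Fintype n] [Fintype m]
    {A B : Matrix n n ℝ} (hAB : A ≤ B) (M : Matrix m n ℝ) : M * A * Mᵀ ≤ M * B * Mᵀ := by
  rw [le_iff, ← Matrix.sub_mul, ← Matrix.mul_sub]
  simpa using hAB.mul_mul_conjTranspose_same M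

lemma PosSemidef.transpose_mul_inv_mul {m : Type*} [Fintype n] [Fintype m] [DecidableEq m]
    {R : Matrix m m ℝ} (hR : R.PosSemidef) (C : Matrix m n ℝ) : (Cᵀ * R⁻¹ * C).PosSemidef := by
  simpa using hR.inv.conjTranspose_mul_mul_same C

end Matrix

section DistributedRiccati

variable {ι κ V : Type*} [Fintype ι] [DecidableEq ι] [Fintype κ] [DecidableEq κ]
  (A G : Matrix ι ι ℝ) (Q : V → Matrix ι ι ℝ) (Nbr : V → Finset V)
  (C : Matrix κ ι ℝ) (R : V → Matrix κ κ ℝ)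

noncomputable def predictedCov (P : V → Matrix ι ι ℝ) (i : V) : Matrix ι ι ℝ :=
  A * P i * Aᵀ + ((Nbr i).card : ℝ) • ∑ j ∈ Nbr i, G * P j * Gᵀ + Q i

noncomputable def covUpdate (P : V → Matrix ι ι ℝ) (i : V) : Matrix ι ι ℝ :=
  ((predictedCov A G Q Nbr P i)⁻¹ + Cᵀ * (R i)⁻¹ * C)⁻¹

lemma predictedCov_mono : Monotone (predictedCov A G Q Nbr) := fun P P' hPP' i => by
  unfold predictedCov
  gcongr ?_ + _ • ?_ + _
  · exact mul_mul_transpose_le_mul_mul_transpose (hPP' i) A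
  · exact Finset.sum_le_sum fun j _ => mul_mul_transpose_le_mul_mul_transpose (hPP' j) G

lemma predictedCov_zero (i : V) : predictedCov A G Q Nbr 0 i = Q i := by
  simp [predictedCov]

variable {A G Q Nbr C R}

lemma predictedCov_posDef (hQ : ∀ i, (Q i).PosDef) {P : V → Matrix ι ι ℝ} (hP : 0 ≤ P) (i : V) :
    (predictedCov A G Q Nbr P i).PosDef :=
  (hQ i).of_le (predictedCov_zero A G Q Nbr i ▸ predictedCov_mono A G Q Nbr hP i)

lemma covUpdate_posDef (hQ : ∀ i, (Q i).PosDef) (hR : ∀ i, (R i).PosSemidef)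
    {P : V → Matrix ι ι ℝ} (hP : 0 ≤ P) (i : V) : (covUpdate A G Q Nbr C R P i).PosDef :=
  ((predictedCov_posDef hQ hP i).inv.add_posSemidef
    ((hR i).transpose_mul_inv_mul C)).inv

lemma covUpdate_mono (hQ : ∀ i, (Q i).PosDef) (hR : ∀ i, (R i).PosSemidef)
    {P P' : V → Matrix ι ι ℝ} (hP : 0 ≤ P) (hPP' : P ≤ P') :
    covUpdate A G Q Nbr C R P ≤ covUpdate A G Q Nbr C R P' := fun i =>
  (predictedCov_posDef hQ hP i).inv_inv_add_le_inv_inv_add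
    (predictedCov_mono A G Q Nbr hPP' i) ((hR i).transpose_mul_inv_mul C)

end DistributedRiccati

/-- With `P_{0,i} = 0`, the distributed covariance recursion
`P_{k+1,i} = ((ÃP_{k,i}Ãᵀ + d_i ∑_{j∈N_i} G̃P_{k,j}G̃ᵀ + Q_i)⁻¹ + CᵀR_i⁻¹C)⁻¹`
is monotonically nondecreasing in `k` for every node `i`. -/
theorem distributed_covariance_monotone {n m N : ℕ}
    (At Gt : Matrix (Fin n) (Fin n) ℝ) (C : Matrix (Fin m) (Fin n) ℝ)
    (Q : Fin N → Matrix (Fin n) (Fin n) ℝ) (hQ : ∀ i, (Q i).PosDef)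
    (R : Fin N → Matrix (Fin m) (Fin m) ℝ) (hR : ∀ i, (R i).PosDef)
    (Nbr : Fin N → Finset (Fin N))
    (P : ℕ → Fin N → Matrix (Fin n) (Fin n) ℝ)
    (hP0 : ∀ i, P 0 i = 0)
    (hPrec : ∀ k i, P (k + 1) i =
      ((At * P k i * Atᵀ + ((Nbr i).card : ℝ) • ∑ j ∈ Nbr i, Gt * P k j * Gtᵀ + Q i)⁻¹
        + Cᵀ * (R i)⁻¹ * C)⁻¹) :
    ∀ k i, (P (k + 1) i - P k i).PosSemidef := by
  have hR' : ∀ i, (R i).PosSemidef := fun i => (hR i).posSemidef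
  have hstart : P 0 = 0 := funext hP0
  have hstep : ∀ k, P (k + 1) = covUpdate At Gt Q Nbr C R (P k) := fun k => funext (hPrec k)
  have hnonneg : ∀ k, 0 ≤ P k := by
    intro k
    induction k with
    | zero => exact hstart.ge
    | succ k ih => exact hstep k ▸ fun i => (covUpdate_posDef hQ hR' ih i).posSemidef.nonneg
  have hmono : ∀ k, P k ≤ P (k + 1) := by
    intro k
    induction k with
    | zero => simpa only [hstart] using hnonneg 1
    | succ k ih => simpa only [hstep] using covUpdate_mono hQ hR' (hnonneg k) ih
  exact hmono
end

section
/- Suppose there exist a matrix K ∈ ℝ^{n×m} and a symmetric positive definite matrix P satisfying P = (I−KC)(ÃPÃᵀ)(I−KC)ᵀ + d_m²(I−KC)G̃PG̃ᵀ(I−KC)ᵀ + (I−KC)Q_m(I−KC)ᵀ + KR_mKᵀ, where Q_m ≥ Q_i and R_m ≥ R_i for all i and d_m ≥ d_i. Then the sequences P_{k,i} defined by P_{k+1,i} = ((ÃP_{k,i}Ãᵀ + d_i∑_{j∈N_i}G̃P_{k,j}G̃ᵀ + Q_i)⁻¹ + CᵀR_i⁻¹C)⁻¹ with P_{0,i}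 = 0 satisfy P_{k,i} ≤ P for all k and all i. -/
/-!
For a fixed gain `K`, the Joseph form `(1 - K C) S (1 - K C)ᵀ + K R Kᵀ` exceeds the optimal
(information-form) update `(S⁻¹ + Cᵀ R⁻¹ C)⁻¹` by `(K - L) (C S Cᵀ + R) (K - L)ᵀ ≥ 0`, where
`L = S Cᵀ (C S Cᵀ + R)⁻¹` is the Kalman gain, and it is monotone in `S` and `R`.
If every `P k j ≤ Pfix`, the predicted covariance of agent `i` is at most
`Ã Pfix Ãᵀ + d_m² G̃ Pfix G̃ᵀ + Q_m`, since its neighbour sum has at most `d_m` terms and weight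
`d_i ≤ d_m`. Hence `P (k+1) i` is at most the Joseph form of that bound, which is `Pfix` by the
fixed-point equation, and induction on `k` concludes.
-/

open Matrix
open scoped MatrixOrder

section Loewner

variable {n m : Type*} [Fintype n] [Fintype m]

theorem Matrix.mul_mul_transpose_le_mul_mul_transpose_s9 {A B : Matrix n n ℝ} (h : A ≤ B)
    (M : Matrix m n ℝ) : M * A * Mᵀ ≤ M * B * Mᵀ := by
  rw [le_iff, ← Matrix.sub_mul, ← Matrix.mul_sub, ← conjTranspose_eq_transpose_of_trivial]
  exact (le_iff.mp h).mul_mul_conjTranspose_same M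

theorem Matrix.mul_mul_transpose_nonneg {A : Matrix n n ℝ} (h : 0 ≤ A) (M : Matrix m n ℝ) :
    0 ≤ M * A * Mᵀ := by
  simpa using mul_mul_transpose_le_mul_mul_transpose_s9 h M

theorem Matrix.PosDef.mul_mul_transpose_add {S : Matrix n n ℝ} {R : Matrix m m ℝ}
    (hS : 0 ≤ S) (hR : R.PosDef) (C : Matrix m n ℝ) : (C * S * Cᵀ + R).PosDef :=
  hR.posSemidef_add (mul_mul_transpose_nonneg hS C).posSemidef

end Loewner

section Joseph

variable {n m : Type*} [Fintype n] [Fintype m] [DecidableEq n]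

def josephUpdate (K : Matrix n m ℝ) (C : Matrix m n ℝ) (R : Matrix m m ℝ)
    (S : Matrix n n ℝ) : Matrix n n ℝ :=
  (1 - K * C) * S * (1 - K * C)ᵀ + K * R * Kᵀ

theorem josephUpdate_mono (K : Matrix n m ℝ) (C : Matrix m n ℝ) {R R' : Matrix m m ℝ}
    {S S' : Matrix n n ℝ} (hR : R ≤ R') (hS : S ≤ S') :
    josephUpdate K C R S ≤ josephUpdate K C R' S' :=
  add_le_add (mul_mul_transpose_le_mul_mul_transpose_s9 hS _)
    (mul_mul_transpose_le_mul_mul_transpose_s9 hR _)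

variable [DecidableEq m]

noncomputable def kalmanUpdate (C : Matrix m n ℝ) (R : Matrix m m ℝ) (S : Matrix n n ℝ) :
    Matrix n n ℝ :=
  (S⁻¹ + Cᵀ * R⁻¹ * C)⁻¹

noncomputable def kalmanGain (C : Matrix m n ℝ) (R : Matrix m m ℝ) (S : Matrix n n ℝ) :
    Matrix n m ℝ :=
  S * Cᵀ * (C * S * Cᵀ + R)⁻¹

variable {C : Matrix m n ℝ} {R : Matrix m m ℝ} {S : Matrix n n ℝ}

theorem kalmanUpdate_posDef (hS : S.PosDef) (hR : R.PosDef) : (kalmanUpdate C R S).PosDef := by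
  have hCRC : (Cᵀ * R⁻¹ * C).PosSemidef := by
    simpa using hR.inv.posSemidef.mul_mul_conjTranspose_same Cᵀ
  exact (hS.inv.add_posSemidef hCRC).inv

theorem kalmanUpdate_eq_sub (hS : S.PosDef) (hR : R.PosDef) :
    kalmanUpdate C R S = S - kalmanGain C R S * C * S := by
  have hSinv : S⁻¹⁻¹ = S := nonsing_inv_nonsing_inv S ((isUnit_iff_isUnit_det S).mp hS.isUnit)
  have hRinv : R⁻¹⁻¹ = R := nonsing_inv_nonsing_inv R ((isUnit_iff_isUnit_det R).mp hR.isUnit)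
  have woodbury := add_mul_mul_inv_eq_sub S⁻¹ Cᵀ R⁻¹ C hS.inv.isUnit hR.inv.isUnit <| by
    rw [hSinv, hRinv, add_comm]
    exact (hR.mul_mul_transpose_add hS.posSemidef.nonneg C).isUnit
  rw [kalmanUpdate, woodbury, hSinv, hRinv, add_comm R, kalmanGain]

theorem josephUpdate_sub_kalmanUpdate (K : Matrix n m ℝ) (hS : S.PosDef) (hR : R.PosDef) :
    josephUpdate K C R S - kalmanUpdate C R S
      = (K - kalmanGain C R S) * (C * S * Cᵀ + R) * (K - kalmanGain C R S)ᵀ := by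
  have hW := hR.mul_mul_transpose_add hS.posSemidef.nonneg C
  have hWdet := (isUnit_iff_isUnit_det _).mp hW.isUnit
  have hSt : Sᵀ = S := hS.isHermitian
  have hWt : (C * S * Cᵀ + R)⁻¹ᵀ = (C * S * Cᵀ + R)⁻¹ := hW.inv.isHermitian
  rw [kalmanUpdate_eq_sub hS hR, josephUpdate, kalmanGain]
  set W := C * S * Cᵀ + R with hWdef
  simp only [transpose_sub, transpose_mul, transpose_one, transpose_transpose, hSt, hWt,
    Matrix.mul_sub, Matrix.sub_mul, Matrix.mul_assoc, Matrix.mul_one, Matrix.one_mul,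
    mul_nonsing_inv_cancel_left _ _ hWdet, nonsing_inv_mul_cancel_left _ _ hWdet]
  rw [hWdef]
  simp only [Matrix.mul_add, Matrix.add_mul, Matrix.mul_assoc]
  abel

theorem kalmanUpdate_le_josephUpdate (K : Matrix n m ℝ) (hS : S.PosDef) (hR : R.PosDef) :
    kalmanUpdate C R S ≤ josephUpdate K C R S := by
  rw [← sub_nonneg, josephUpdate_sub_kalmanUpdate K hS hR]
  exact mul_mul_transpose_nonneg
    (hR.mul_mul_transpose_add hS.posSemidef.nonneg C).posSemidef.nonneg _

end Joseph

section Network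

variable {n ι : Type*} [Fintype n]

theorem prediction_posDef (A G : Matrix n n ℝ) {Q X : Matrix n n ℝ} (hQ : Q.PosDef)
    (hX : 0 ≤ X) (s : Finset ι) {P : ι → Matrix n n ℝ} (hP : ∀ j ∈ s, 0 ≤ P j) {c : ℝ}
    (hc : 0 ≤ c) :
    (A * X * Aᵀ + c • ∑ j ∈ s, G * P j * Gᵀ + Q).PosDef := by
  have hsum : 0 ≤ ∑ j ∈ s, G * P j * Gᵀ :=
    Finset.sum_nonneg fun j hj => mul_mul_transpose_nonneg (hP j hj) G
  exact hQ.posSemidef_add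
    (add_nonneg (mul_mul_transpose_nonneg hX A) (smul_nonneg hc hsum)).posSemidef

theorem prediction_le (A G : Matrix n n ℝ) {Q Q' X Y : Matrix n n ℝ} (hQ : Q ≤ Q') (hX : X ≤ Y)
    (hY : 0 ≤ Y) (s : Finset ι) {P : ι → Matrix n n ℝ} (hP : ∀ j ∈ s, P j ≤ Y) {d : ℝ}
    (hd : (s.card : ℝ) ≤ d) :
    A * X * Aᵀ + (s.card : ℝ) • ∑ j ∈ s, G * P j * Gᵀ + Q
      ≤ A * Y * Aᵀ + d ^ 2 • (G * Y * Gᵀ) + Q' := by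
  have hsum : (s.card : ℝ) • ∑ j ∈ s, G * P j * Gᵀ ≤ d ^ 2 • (G * Y * Gᵀ) := calc
    _ ≤ (s.card : ℝ) • ∑ j ∈ s, G * Y * Gᵀ :=
      smul_le_smul_of_nonneg_left
        (Finset.sum_le_sum fun j hj => mul_mul_transpose_le_mul_mul_transpose_s9 (hP j hj) G)
        s.card.cast_nonneg
    _ = (s.card : ℝ) ^ 2 • (G * Y * Gᵀ) := by
      rw [Finset.sum_const, ← Nat.cast_smul_eq_nsmul ℝ, smul_smul, sq]
    _ ≤ d ^ 2 • (G * Y * Gᵀ) :=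
      smul_le_smul_of_nonneg_right (pow_le_pow_left₀ s.card.cast_nonneg hd 2)
        (mul_mul_transpose_nonneg hY G)
  exact add_le_add (add_le_add (mul_mul_transpose_le_mul_mul_transpose_s9 hX A) hsum) hQ

end Network

/-- Uniform boundedness of the distributed covariance recursion by a fixed-point matrix `P`
associated with a common gain `K` (Lemma 1 of the paper). -/
theorem distributed_covariance_bounded {n m N : ℕ}
    (At Gt : Matrix (Fin n) (Fin n) ℝ) (C : Matrix (Fin m) (Fin n) ℝ)
    (Q : Fin N → Matrix (Fin n) (Fin n) ℝ) (hQ : ∀ i, (Q i).PosDef)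
    (R : Fin N → Matrix (Fin m) (Fin m) ℝ) (hR : ∀ i, (R i).PosDef)
    (Qm : Matrix (Fin n) (Fin n) ℝ) (hQm : ∀ i, (Qm - Q i).PosSemidef)
    (Rm : Matrix (Fin m) (Fin m) ℝ) (hRm : ∀ i, (Rm - R i).PosSemidef)
    (Nbr : Fin N → Finset (Fin N)) (dm : ℕ) (hdm : ∀ i, (Nbr i).card ≤ dm)
    (K : Matrix (Fin n) (Fin m) ℝ)
    (Pfix : Matrix (Fin n) (Fin n) ℝ) (hPfix : Pfix.PosDef)
    (hfix : Pfix = (1 - K * C) * (At * Pfix * Atᵀ) * (1 - K * C)ᵀ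
      + (dm : ℝ) ^ 2 • ((1 - K * C) * (Gt * Pfix * Gtᵀ) * (1 - K * C)ᵀ)
      + (1 - K * C) * Qm * (1 - K * C)ᵀ + K * Rm * Kᵀ)
    (P : ℕ → Fin N → Matrix (Fin n) (Fin n) ℝ)
    (hP0 : ∀ i, P 0 i = 0)
    (hPrec : ∀ k i, P (k + 1) i =
      ((At * P k i * Atᵀ + ((Nbr i).card : ℝ) • ∑ j ∈ Nbr i, Gt * P k j * Gtᵀ + Q i)⁻¹
        + Cᵀ * (R i)⁻¹ * C)⁻¹) :
    ∀ k i, (Pfix - P k i).PosSemidef := by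
  set Sm := At * Pfix * Atᵀ + (dm : ℝ) ^ 2 • (Gt * Pfix * Gtᵀ) + Qm
  have hPfix_joseph : Pfix = josephUpdate K C Rm Sm := by
    rw [hfix]
    simp only [josephUpdate, Sm, Matrix.mul_add, Matrix.add_mul, Matrix.mul_smul,
      Matrix.smul_mul]
  suffices h : ∀ k i, 0 ≤ P k i ∧ P k i ≤ Pfix from fun k i => le_iff.mp (h k i).2
  intro k
  induction k with
  | zero =>
    intro i
    simpa [hP0 i] using hPfix.posSemidef.nonneg
  | succ k ih =>
    intro i
    have hS := prediction_posDef At Gt (hQ i) (ih i).1 (Nbr i) (fun j _ => (ih j).1)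
      (Nat.cast_nonneg (Nbr i).card)
    have hS_le := prediction_le At Gt (le_iff.mpr (hQm i)) (ih i).2 hPfix.posSemidef.nonneg
      (Nbr i) (fun j _ => (ih j).2) (Nat.cast_le.mpr (hdm i))
    rw [hPrec k i]
    refine ⟨(kalmanUpdate_posDef hS (hR i)).posSemidef.nonneg, ?_⟩
    calc kalmanUpdate C (R i) _
        ≤ josephUpdate K C (R i) _ := kalmanUpdate_le_josephUpdate K hS (hR i)
      _ ≤ josephUpdate K C Rm Sm := josephUpdate_mono K C (le_iff.mpr (hRm i)) hS_le
      _ = Pfix := hPfix_joseph.symm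
end

section
/- Let L ∈ ℝ^{n×m} be such that (I−LC)Ã is Schur stable, z > 0, and let Θ be the positive definite solution of Θ = (I−LC)(ÃΘÃᵀ + zI + Q_m)(I−LC)ᵀ + LR_mLᵀ. If ‖G‖₂ ≤ sqrt( z / (d_m²(μ+μ²)λ_max(Θ)) ), then with G̃ = sqrt(μ+μ²)G one has d_m² G̃Θ G̃ᵀ ≤ zI, and consequently the map X ↦ (I−LC)(ÃXÃᵀ + d_m²G̃XG̃ᵀ + Q_m)(I−LC)ᵀ + LR_mLᵀ maps the order interval [0, Θ] into itself. -/
open Matrix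
open scoped Matrix.Norms.L2Operator

/-!
In the Loewner order, `Θ ≤ λ_max(Θ) I` and `G Gᵀ ≤ ‖G‖₂² I`, so
`d_m² G̃ΘG̃ᵀ ≤ d_m² (μ + μ²) λ_max(Θ) ‖G‖₂² I ≤ z I` by the choice of the bound on `‖G‖₂`.
The Riccati map `Φ` is monotone and preserves positive semidefiniteness, and `Φ(Θ)` is the
fixed-point expression for `Θ` with `z I` replaced by the smaller `d_m² G̃ΘG̃ᵀ`; hence
`0 ≤ X ≤ Θ` gives `0 ≤ Φ(X) ≤ Φ(Θ) ≤ Θ`.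
-/

open scoped MatrixOrder ComplexOrder

theorem Real.mul_sq_le_of_le_sqrt_div {a x z : ℝ} (hz : 0 ≤ z) (hx : 0 ≤ x) (h : x ≤ √(z / a)) :
    a * x ^ 2 ≤ z := by
  rcases le_or_gt a 0 with ha | ha
  · nlinarith [mul_nonpos_of_nonpos_of_nonneg ha (sq_nonneg x)]
  · rw [Real.le_sqrt hx (by positivity), le_div_iff₀ ha] at h
    linarith

namespace Matrix

variable {𝕜 m n : Type*} [RCLike 𝕜] [Fintype m] [Fintype n]

theorem mul_mul_conjTranspose_le_mul_mul_conjTranspose {A B : Matrix n n 𝕜} (hAB : A ≤ B)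
    (G : Matrix m n 𝕜) : G * A * Gᴴ ≤ G * B * Gᴴ := by
  rw [le_iff, ← Matrix.sub_mul, ← Matrix.mul_sub]
  exact (le_iff.mp hAB).mul_mul_conjTranspose_same G

omit [Fintype m] in
theorem sqrt_smul_mul_mul_conjTranspose_sqrt_smul {a : ℝ} (ha : 0 ≤ a) (G : Matrix m n 𝕜)
    (X : Matrix n n 𝕜) : (√a • G) * X * (√a • G)ᴴ = a • (G * X * Gᴴ) := by
  rw [conjTranspose_smul, star_trivial, Matrix.smul_mul, Matrix.mul_smul, Matrix.smul_mul,
    smul_smul, Real.mul_self_sqrt ha]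

section Spectral

variable [DecidableEq n]

theorem IsHermitian.le_smul_one_of_eigenvalues_le {A : Matrix n n 𝕜} (hA : A.IsHermitian)
    {r : ℝ} (h : ∀ i, hA.eigenvalues i ≤ r) : A ≤ r • (1 : Matrix n n 𝕜) := by
  rw [← Algebra.algebraMap_eq_smul_one]
  refine le_algebraMap_of_spectrum_le fun s hs => ?_
  rw [hA.spectrum_real_eq_range_eigenvalues] at hs
  obtain ⟨i, rfl⟩ := hs
  exact h i

theorem IsHermitian.le_iSup_eigenvalues_smul_one {A : Matrix n n 𝕜} (hA : A.IsHermitian) :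
    A ≤ (⨆ i, hA.eigenvalues i) • (1 : Matrix n n 𝕜) :=
  hA.le_smul_one_of_eigenvalues_le fun i => le_ciSup (Set.finite_range _).bddAbove i

theorem IsHermitian.le_l2_opNorm_smul_one {A : Matrix n n 𝕜} (hA : A.IsHermitian) :
    A ≤ ‖A‖ • (1 : Matrix n n 𝕜) := by
  rcases isEmpty_or_nonempty n with hn | hn
  · exact (Subsingleton.elim _ _).le
  rw [← Algebra.algebraMap_eq_smul_one]
  refine le_algebraMap_of_spectrum_le fun s hs => ?_
  rw [← spectrum.algebraMap_mem_iff 𝕜] at hs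
  calc s ≤ ‖algebraMap ℝ 𝕜 s‖ := by simpa using Real.le_norm_self s
    _ ≤ ‖A‖ := spectrum.norm_le_norm_of_mem hs

theorem mul_conjTranspose_self_le_l2_opNorm_sq_smul_one [DecidableEq m] (G : Matrix n m 𝕜) :
    G * Gᴴ ≤ (‖G‖ ^ 2) • (1 : Matrix n n 𝕜) := by
  have h := (isHermitian_conjTranspose_mul_self Gᴴ).le_l2_opNorm_smul_one
  rwa [l2_opNorm_conjTranspose_mul_self, l2_opNorm_conjTranspose, conjTranspose_conjTranspose,
    ← sq] at h

theorem mul_mul_conjTranspose_le_smul_one_of_le_smul_one [DecidableEq m] {Θ : Matrix n n 𝕜}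
    {r : ℝ} (hΘ : Θ ≤ r • (1 : Matrix n n 𝕜)) (hr : 0 ≤ r) (G : Matrix m n 𝕜) :
    G * Θ * Gᴴ ≤ (r * ‖G‖ ^ 2) • (1 : Matrix m m 𝕜) :=
  calc G * Θ * Gᴴ ≤ G * (r • (1 : Matrix n n 𝕜)) * Gᴴ :=
        mul_mul_conjTranspose_le_mul_mul_conjTranspose hΘ G
    _ = r • (G * Gᴴ) := by rw [Matrix.mul_smul, Matrix.mul_one, Matrix.smul_mul]
    _ ≤ r • ((‖G‖ ^ 2) • (1 : Matrix m m 𝕜)) :=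
        smul_le_smul_of_nonneg_left (mul_conjTranspose_self_le_l2_opNorm_sq_smul_one G) hr
    _ = (r * ‖G‖ ^ 2) • (1 : Matrix m m 𝕜) := smul_smul _ _ _

end Spectral

section Riccati

def riccatiMap (K A G Q : Matrix n n 𝕜) (L : Matrix n m 𝕜) (R : Matrix m m 𝕜) (c : ℝ)
    (X : Matrix n n 𝕜) : Matrix n n 𝕜 :=
  K * (A * X * Aᴴ + c • (G * X * Gᴴ) + Q) * Kᴴ + L * R * Lᴴ

variable {K A G Q X Θ W : Matrix n n 𝕜} {L : Matrix n m 𝕜} {R : Matrix m m 𝕜} {c : ℝ}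

theorem riccatiMap_posSemidef (hX : X.PosSemidef) (hQ : Q.PosSemidef) (hR : R.PosSemidef)
    (hc : 0 ≤ c) : (riccatiMap K A G Q L R c X).PosSemidef := by
  have hinner : (A * X * Aᴴ + c • (G * X * Gᴴ) + Q).PosSemidef :=
    ((hX.mul_mul_conjTranspose_same A).add ((hX.mul_mul_conjTranspose_same G).smul hc)).add hQ
  exact (hinner.mul_mul_conjTranspose_same K).add (hR.mul_mul_conjTranspose_same L)

theorem riccatiMap_le_of_le (hΘ : Θ = K * (A * Θ * Aᴴ + W + Q) * Kᴴ + L * R * Lᴴ)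
    (hW : c • (G * Θ * Gᴴ) ≤ W) (hc : 0 ≤ c) (hX : X ≤ Θ) :
    riccatiMap K A G Q L R c X ≤ Θ := by
  have hinner : A * X * Aᴴ + c • (G * X * Gᴴ) + Q ≤ A * Θ * Aᴴ + W + Q := by
    gcongr
    · exact mul_mul_conjTranspose_le_mul_mul_conjTranspose hX A
    · exact (smul_le_smul_of_nonneg_left
        (mul_mul_conjTranspose_le_mul_mul_conjTranspose hX G) hc).trans hW
  rw [riccatiMap]
  conv_rhs => rw [hΘ]
  gcongr
  exact mul_mul_conjTranspose_le_mul_mul_conjTranspose hinner K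

end Riccati

end Matrix

theorem small_coupling_invariance_general {n m : ℕ}
    (G : Matrix (Fin n) (Fin n) ℝ) (C : Matrix (Fin m) (Fin n) ℝ)
    (μ : ℝ) (hμ : 0 < μ)
    (At : Matrix (Fin n) (Fin n) ℝ)
    (Gt : Matrix (Fin n) (Fin n) ℝ) (hGt : Gt = Real.sqrt (μ + μ ^ 2) • G)
    (Qm : Matrix (Fin n) (Fin n) ℝ) (hQm : Qm.PosDef)
    (Rm : Matrix (Fin m) (Fin m) ℝ) (hRm : Rm.PosDef)
    (dm : ℕ) (z : ℝ) (hz : 0 < z)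
    (L : Matrix (Fin n) (Fin m) ℝ)
    (Θ : Matrix (Fin n) (Fin n) ℝ) (hΘ : Θ.PosDef)
    (hΘfix : Θ = (1 - L * C) * (At * Θ * Atᵀ + z • (1 : Matrix (Fin n) (Fin n) ℝ) + Qm)
        * (1 - L * C)ᵀ + L * Rm * Lᵀ)
    (hG : ‖G‖ ≤ Real.sqrt (z / ((dm : ℝ) ^ 2 * (μ + μ ^ 2) * (⨆ i, hΘ.1.eigenvalues i)))) :
    (z • (1 : Matrix (Fin n) (Fin n) ℝ) - (dm : ℝ) ^ 2 • (Gt * Θ * Gtᵀ)).PosSemidef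
    ∧ ∀ X : Matrix (Fin n) (Fin n) ℝ, X.PosSemidef → (Θ - X).PosSemidef →
        ((1 - L * C) * (At * X * Atᵀ + (dm : ℝ) ^ 2 • (Gt * X * Gtᵀ) + Qm) * (1 - L * C)ᵀ
            + L * Rm * Lᵀ).PosSemidef
        ∧ (Θ - ((1 - L * C) * (At * X * Atᵀ + (dm : ℝ) ^ 2 • (Gt * X * Gtᵀ) + Qm)
            * (1 - L * C)ᵀ + L * Rm * Lᵀ)).PosSemidef := by
  simp only [← conjTranspose_eq_transpose_of_trivial] at hΘfix ⊢
  set lam := ⨆ i, hΘ.1.eigenvalues i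
  have hlam : 0 ≤ lam := Real.iSup_nonneg hΘ.posSemidef.eigenvalues_nonneg
  have hsmall : (dm : ℝ) ^ 2 * (μ + μ ^ 2) * lam * ‖G‖ ^ 2 ≤ z :=
    Real.mul_sq_le_of_le_sqrt_div hz.le (norm_nonneg G) hG
  have hcoupling : (dm : ℝ) ^ 2 • (Gt * Θ * Gtᴴ) ≤ z • (1 : Matrix (Fin n) (Fin n) ℝ) :=
    calc (dm : ℝ) ^ 2 • (Gt * Θ * Gtᴴ) = ((dm : ℝ) ^ 2 * (μ + μ ^ 2)) • (G * Θ * Gᴴ) := by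
          rw [hGt, sqrt_smul_mul_mul_conjTranspose_sqrt_smul (by positivity), smul_smul]
      _ ≤ ((dm : ℝ) ^ 2 * (μ + μ ^ 2)) • ((lam * ‖G‖ ^ 2) • (1 : Matrix (Fin n) (Fin n) ℝ)) :=
          smul_le_smul_of_nonneg_left (mul_mul_conjTranspose_le_smul_one_of_le_smul_one
            hΘ.1.le_iSup_eigenvalues_smul_one hlam G) (by positivity)
      _ = ((dm : ℝ) ^ 2 * (μ + μ ^ 2) * lam * ‖G‖ ^ 2) • (1 : Matrix (Fin n) (Fin n) ℝ) := by
          rw [smul_smul, ← mul_assoc]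
      _ ≤ z • (1 : Matrix (Fin n) (Fin n) ℝ) :=
          smul_le_smul_of_nonneg_right hsmall PosSemidef.one.nonneg
  exact ⟨hcoupling, fun X hX hXΘ =>
    ⟨riccatiMap_posSemidef hX hQm.posSemidef hRm.posSemidef (by positivity),
      riccatiMap_le_of_le hΘfix hcoupling (by positivity) hXΘ⟩⟩

/-- Small-coupling invariance step (Lemma 2 of the paper): if the spectral norm of `G` is small
enough, then `d_m² G̃ΘG̃ᵀ ≤ zI`, and the fixed-gain Riccati-type map sends `[0, Θ]` into itself. -/
theorem small_coupling_invariance {n m : ℕ}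
    (A G : Matrix (Fin n) (Fin n) ℝ) (C : Matrix (Fin m) (Fin n) ℝ)
    (μ : ℝ) (hμ : 0 < μ)
    (At : Matrix (Fin n) (Fin n) ℝ) (hAt : At = Real.sqrt (1 + μ) • A)
    (Gt : Matrix (Fin n) (Fin n) ℝ) (hGt : Gt = Real.sqrt (μ + μ ^ 2) • G)
    (Qm : Matrix (Fin n) (Fin n) ℝ) (hQm : Qm.PosDef)
    (Rm : Matrix (Fin m) (Fin m) ℝ) (hRm : Rm.PosDef)
    (dm : ℕ) (z : ℝ) (hz : 0 < z)
    (L : Matrix (Fin n) (Fin m) ℝ)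
    (hSchur : ∀ c ∈ spectrum ℂ (((1 - L * C) * At).map (algebraMap ℝ ℂ)), ‖c‖ < 1)
    (Θ : Matrix (Fin n) (Fin n) ℝ) (hΘ : Θ.PosDef)
    (hΘfix : Θ = (1 - L * C) * (At * Θ * Atᵀ + z • (1 : Matrix (Fin n) (Fin n) ℝ) + Qm)
        * (1 - L * C)ᵀ + L * Rm * Lᵀ)
    (hG : ‖G‖ ≤ Real.sqrt (z / ((dm : ℝ) ^ 2 * (μ + μ ^ 2) * (⨆ i, hΘ.1.eigenvalues i)))) :
    (z • (1 : Matrix (Fin n) (Fin n) ℝ) - (dm : ℝ) ^ 2 • (Gt * Θ * Gtᵀ)).PosSemidef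
    ∧ ∀ X : Matrix (Fin n) (Fin n) ℝ, X.PosSemidef → (Θ - X).PosSemidef →
        ((1 - L * C) * (At * X * Atᵀ + (dm : ℝ) ^ 2 • (Gt * X * Gtᵀ) + Qm) * (1 - L * C)ᵀ
            + L * Rm * Lᵀ).PosSemidef
        ∧ (Θ - ((1 - L * C) * (At * X * Atᵀ + (dm : ℝ) ^ 2 • (Gt * X * Gtᵀ) + Qm)
            * (1 - L * C)ᵀ + L * Rm * Lᵀ)).PosSemidef :=
  small_coupling_invariance_general G C μ hμ At Gt hGt Qm hQm Rm hRm dm z hz L Θ hΘ hΘfix hG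
end

section
/- Fix node i and the coupled map h_h(Y) = ÃY_hÃᵀ + d_h∑_{j∈N_h}G̃Y_jG̃ᵀ + Q_h. Let Z⁰ and Z¹ be two trajectories defined recursively on l = k−τ_i,…,k by Z_{l,h} = P_h if l ≤ k−τ_h and Z_{l,h} = h_h(Z_{l−1}) otherwise. If at the initial time Z^0_{k−τ_i,i} ≤ Z^1_{k−τ_i,i} and Z^0_{k−τ_i,j} = Z^1_{k−τ_i,j} for all j ≠ i, then Z^0_{k,h} ≤ Z^1_{k,h} for all h = 1,…,N. -/
/-! Subtracting the two recursions cancels `Q_h`, so the differences `Z¹_l − Z⁰_l` obey the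
linear recursion `D ↦ Ã D_h Ãᵀ + d_h ∑_{j ∈ N_h} G̃ D_j G̃ᵀ` (or vanish at a reset node).
Congruences, nonnegative multiples and finite sums preserve positive semidefiniteness, so by
induction on `l` all differences stay positive semidefinite from the initial time on. -/

open Matrix
open scoped BigOperators

namespace Matrix.PosSemidef

variable {m : Type*} [Fintype m]

theorem mul_mul_transpose_same {M : Matrix m m ℝ} (hM : M.PosSemidef) (A : Matrix m m ℝ) :
    (A * M * Aᵀ).PosSemidef := by
  simpa using hM.mul_mul_conjTranspose_same A

end Matrix.PosSemidef

section CoupledStep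

variable {m ι : Type*} [Fintype m]

def coupledStep (A G : Matrix m m ℝ) (Q : ι → Matrix m m ℝ) (Nbr : ι → Finset ι)
    (Y : ι → Matrix m m ℝ) (h : ι) : Matrix m m ℝ :=
  A * Y h * Aᵀ + ((Nbr h).card : ℝ) • ∑ j ∈ Nbr h, G * Y j * Gᵀ + Q h

variable (A G : Matrix m m ℝ) (Q : ι → Matrix m m ℝ) (Nbr : ι → Finset ι)

theorem coupledStep_sub (Y₀ Y₁ : ι → Matrix m m ℝ) (h : ι) :
    coupledStep A G Q Nbr Y₁ h - coupledStep A G Q Nbr Y₀ h =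
      A * (Y₁ h - Y₀ h) * Aᵀ + ((Nbr h).card : ℝ) • ∑ j ∈ Nbr h, G * (Y₁ j - Y₀ j) * Gᵀ := by
  simp only [coupledStep, Matrix.mul_sub, Matrix.sub_mul, Finset.sum_sub_distrib, smul_sub]
  abel

theorem coupledStep_sub_posSemidef {Y₀ Y₁ : ι → Matrix m m ℝ}
    (hY : ∀ j, (Y₁ j - Y₀ j).PosSemidef) (h : ι) :
    (coupledStep A G Q Nbr Y₁ h - coupledStep A G Q Nbr Y₀ h).PosSemidef := by
  rw [coupledStep_sub]
  refine ((hY h).mul_mul_transpose_same A).add (PosSemidef.smul ?_ (by positivity))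
  exact posSemidef_sum _ fun j _ => (hY j).mul_mul_transpose_same G

end CoupledStep

theorem coupled_trajectory_monotone_general {n N : ℕ}
    (At Gt : Matrix (Fin n) (Fin n) ℝ)
    (Q Pst : Fin N → Matrix (Fin n) (Fin n) ℝ)
    (Nbr : Fin N → Finset (Fin N))
    (τ : Fin N → ℕ) (k : ℕ)
    (i : Fin N)
    (Z0 Z1 : ℕ → Fin N → Matrix (Fin n) (Fin n) ℝ)
    (hZ0 : ∀ l, k - τ i < l → l ≤ k → ∀ h, Z0 l h =
      if l ≤ k - τ h then Pst h
      else At * Z0 (l - 1) h * Atᵀ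
        + ((Nbr h).card : ℝ) • ∑ j ∈ Nbr h, Gt * Z0 (l - 1) j * Gtᵀ + Q h)
    (hZ1 : ∀ l, k - τ i < l → l ≤ k → ∀ h, Z1 l h =
      if l ≤ k - τ h then Pst h
      else At * Z1 (l - 1) h * Atᵀ
        + ((Nbr h).card : ℝ) • ∑ j ∈ Nbr h, Gt * Z1 (l - 1) j * Gtᵀ + Q h)
    (hinit_i : (Z1 (k - τ i) i - Z0 (k - τ i) i).PosSemidef)
    (hinit_ne : ∀ j : Fin N, j ≠ i → Z0 (k - τ i) j = Z1 (k - τ i) j) :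
    ∀ h, (Z1 k h - Z0 k h).PosSemidef := by
  suffices key : ∀ l, k - τ i ≤ l → l ≤ k → ∀ h, (Z1 l h - Z0 l h).PosSemidef from
    key k (Nat.sub_le k (τ i)) le_rfl
  intro l hl
  induction l, hl using Nat.le_induction with
  | base =>
    intro _ h
    by_cases hhi : h = i
    · exact hhi ▸ hinit_i
    · simpa [hinit_ne h hhi] using PosSemidef.zero
  | succ l hl IH =>
    intro hlk h
    have hstart : k - τ i < l + 1 := Nat.lt_succ_of_le hl
    rw [hZ0 (l + 1) hstart hlk h, hZ1 (l + 1) hstart hlk h]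
    split_ifs
    · simpa using PosSemidef.zero
    · exact coupledStep_sub_posSemidef At Gt Q Nbr (IH (Nat.le_of_succ_le hlk)) h

/-- Lemma 5 of the paper: a monotone perturbation at a single node `i` at time `k − τᵢ`
propagates monotonically through the coupled covariance recursion up to time `k`. -/
theorem coupled_trajectory_monotone {n N : ℕ}
    (At Gt : Matrix (Fin n) (Fin n) ℝ)
    (Q Pst : Fin N → Matrix (Fin n) (Fin n) ℝ)
    (hQ : ∀ h, (Q h).PosSemidef) (hPst : ∀ h, (Pst h).PosSemidef)
    (Nbr : Fin N → Finset (Fin N))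
    (τ : Fin N → ℕ) (k : ℕ) (hτ : ∀ h, τ h ≤ k)
    (i : Fin N)
    (Z0 Z1 : ℕ → Fin N → Matrix (Fin n) (Fin n) ℝ)
    (hZ0 : ∀ l, k - τ i < l → l ≤ k → ∀ h, Z0 l h =
      if l ≤ k - τ h then Pst h
      else At * Z0 (l - 1) h * Atᵀ
        + ((Nbr h).card : ℝ) • ∑ j ∈ Nbr h, Gt * Z0 (l - 1) j * Gtᵀ + Q h)
    (hZ1 : ∀ l, k - τ i < l → l ≤ k → ∀ h, Z1 l h =
      if l ≤ k - τ h then Pst h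
      else At * Z1 (l - 1) h * Atᵀ
        + ((Nbr h).card : ℝ) • ∑ j ∈ Nbr h, Gt * Z1 (l - 1) j * Gtᵀ + Q h)
    (hinit_i : (Z1 (k - τ i) i - Z0 (k - τ i) i).PosSemidef)
    (hinit_ne : ∀ j : Fin N, j ≠ i → Z0 (k - τ i) j = Z1 (k - τ i) j) :
    ∀ h, (Z1 k h - Z0 k h).PosSemidef :=
  coupled_trajectory_monotone_general At Gt Q Pst Nbr τ k i Z0 Z1 hZ0 hZ1 hinit_i hinit_ne
end
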